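/- Let d ≥ 1 and let α, β be d × d complex matrices such that γ := β − α is symmetric. Let f, g : ℝ^d → ℂ be smooth and ℤ^d-periodic. Then for every integer N ≥ 0, Σ_{a+b=N, a,b≥0} (1/(2^a · a!)) ∂_γ^a (C_b^α(f,g)) = Σ_{a+b+c=N, a,b,c≥0} (1/(2^b · b!)) (1/(2^c · c!)) C_a^β(∂_γ^b f, ∂_γ^c g). (This is the order-N coefficient in ℏ of the identity e^{(ℏ/2)∂_γ}(f ⋆_α g) = (e^{(ℏ/2)∂_γ} f) ⋆_β (e^{(ℏ/2)∂_γ} g), i.e. e^{(ℏ/2)∂_γ} is an isomorphism from ⋆_α to ⋆_β.) -/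

import Mathlib

open scoped Real

noncomputable section

/-- `ℤ^d`-periodicity of a function on `ℝ^d`. -/
def IsPeriodic (d : ℕ) (f : (Fin d → ℝ) → ℂ) : Prop :=
  ∀ (u : Fin d → ℝ) (a : Fin d → ℤ), f (u + fun i => (a i : ℝ)) = f u

/-- Partial derivative `∂/∂u^i`. -/
def pd (d : ℕ) (i : Fin d) (f : (Fin d → ℝ) → ℂ) : (Fin d → ℝ) → ℂ :=
  fun u => fderiv ℝ f u (Pi.single i (1:ℝ))

/-- Iterated derivative `∂^j/∂u^{a_1}⋯∂u^{a_j}` along a list of indices. -/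
def dAlong (d : ℕ) (l : List (Fin d)) (f : (Fin d → ℝ) → ℂ) : (Fin d → ℝ) → ℂ :=
  l.foldr (pd d) f

/-- `C_j^α(f,g) = (1/j!) Σ_{a,b} α_{a_1 b_1}⋯α_{a_j b_j}
(∂^j f/∂u^{a_1}⋯∂u^{a_j})(∂^j g/∂u^{b_1}⋯∂u^{b_j})`, the `j`-th coefficient of the
product `f ⋆_α g = Mult ∘ e^{ℏα}(f ⊗ g)`. -/
def CA (d j : ℕ) (α : Matrix (Fin d) (Fin d) ℂ) (f g : (Fin d → ℝ) → ℂ) :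
    (Fin d → ℝ) → ℂ :=
  fun u => (1 / (Nat.factorial j : ℂ)) *
    ∑ a : Fin j → Fin d, ∑ b : Fin j → Fin d,
      (∏ l, α (a l) (b l)) * (dAlong d (List.ofFn a) f u * dAlong d (List.ofFn b) g u)

/-- The second-order operator `∂_γ = Σ_{a,b} γ_{ab} ∂²/∂u^a ∂u^b`. -/
def dG (d : ℕ) (γ : Matrix (Fin d) (Fin d) ℂ) (f : (Fin d → ℝ) → ℂ) :
    (Fin d → ℝ) → ℂ :=
  fun u => ∑ a, ∑ b, γ a b * pd d a (pd d b f) u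

/-!
Constant-coefficient operators are handled through their symbols: `p ∈ ℂ[X]` acts on `f` as
`p(∂)`, and `t ∈ ℂ[X] ⊗ ℂ[X]` acts on `(f, g)` as `t(∂ ⊗ 1, 1 ⊗ ∂)` followed by restriction to the
diagonal. By the Leibniz rule `∂/∂uⁱ` acts on the latter through `Xᵢ ⊗ 1 + 1 ⊗ Xᵢ`, so for symmetric
`γ` the operator `∂_γ` acts through `Q ⊗ 1 + 1 ⊗ Q + 2 P_γ`, where `Q = Σ γ_ab X_a X_b` and
`P_m = Σ m_ab X_a ⊗ X_b`, while `C_j^m` is the action of `P_m^j / j!`. The two sides of the identity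
are then the actions of the `ℏ^N`-coefficients of `e^{ℏ(Q ⊗ 1 + 1 ⊗ Q + 2 P_γ)/2} e^{ℏ P_α}` and
`e^{ℏ P_β} e^{ℏ (Q ⊗ 1)/2} e^{ℏ (1 ⊗ Q)/2}`, which agree in the commutative ring
`(ℂ[X] ⊗ ℂ[X])⟦ℏ⟧` because `P_β = P_α + P_γ`.
-/

open MvPolynomial TensorProduct
open scoped ContDiff

variable {d : ℕ} {f g : (Fin d → ℝ) → ℂ}

theorem ContDiff.pd (hf : ContDiff ℝ ∞ f) (i : Fin d) : ContDiff ℝ ∞ (pd d i f) :=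
  (hf.fderiv_right le_rfl).clm_apply contDiff_const

theorem pd_zero (i : Fin d) : pd d i (0 : (Fin d → ℝ) → ℂ) = 0 := by
  ext u
  simp [pd]

theorem pd_add (hf : Differentiable ℝ f) (hg : Differentiable ℝ g) (i : Fin d) :
    pd d i (f + g) = pd d i f + pd d i g := by
  ext u
  simp [pd, fderiv_add (hf u) (hg u)]

theorem pd_smul (hf : Differentiable ℝ f) (c : ℂ) (i : Fin d) :
    pd d i (c • f) = c • pd d i f := by
  ext u
  simp [pd, fderiv_const_smul (hf u)]

theorem pd_mul (hf : Differentiable ℝ f) (hg : Differentiable ℝ g) (i : Fin d) :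
    pd d i (f * g) = pd d i f * g + f * pd d i g := by
  ext u
  simp [pd, fderiv_mul (hf u) (hg u)]
  ring

theorem pd_comm (hf : ContDiff ℝ ∞ f) (i j : Fin d) :
    pd d i (pd d j f) = pd d j (pd d i f) := by
  ext u
  have hdf : Differentiable ℝ (fderiv ℝ f) :=
    (hf.fderiv_right (m := ∞) le_rfl).differentiable (by simp)
  have hpd : ∀ v w : Fin d → ℝ,
      fderiv ℝ (fun y => fderiv ℝ f y v) u w = fderiv ℝ (fderiv ℝ f) u w v := fun v w => by
    rw [fderiv_clm_apply (hdf u) (differentiableAt_const v)]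
    simp
  have hsymm : IsSymmSndFDerivAt ℝ f u :=
    hf.contDiffAt.isSymmSndFDerivAt (by simp; exact ENat.LEInfty.out)
  exact (hpd _ _).trans ((hsymm _ _).trans (hpd _ _).symm)

theorem ContDiff.dAlong (hf : ContDiff ℝ ∞ f) (l : List (Fin d)) : ContDiff ℝ ∞ (dAlong d l f) := by
  induction l with
  | nil => exact hf
  | cons i l ih => exact ih.pd i

theorem dAlong_perm (hf : ContDiff ℝ ∞ f) {l l' : List (Fin d)} (h : l.Perm l') :
    dAlong d l f = dAlong d l' f := by
  induction h with
  | nil => rfl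
  | cons i _ ih => exact congrArg (pd d i) ih
  | swap i j l => exact pd_comm (hf.dAlong l) j i
  | trans _ _ ih₁ ih₂ => exact ih₁.trans ih₂

-- `toList` picks an arbitrary order of the indices, harmless for smooth `f` (`dAlong_perm`).
def pdMulti (s : Fin d →₀ ℕ) (f : (Fin d → ℝ) → ℂ) : (Fin d → ℝ) → ℂ :=
  dAlong d (Finsupp.toMultiset s).toList f

theorem pdMulti_zero : pdMulti 0 f = f := by
  simp [pdMulti, dAlong]

theorem pdMulti_single_add (hf : ContDiff ℝ ∞ f) (i : Fin d) (s : Fin d →₀ ℕ) :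
    pdMulti (Finsupp.single i 1 + s) f = pd d i (pdMulti s f) := by
  show dAlong d _ f = dAlong d (i :: _) f
  refine dAlong_perm hf (Multiset.coe_eq_coe.mp ?_)
  simp [Finsupp.toMultiset_add, Multiset.singleton_add, ← Multiset.cons_coe]

theorem ContDiff.pdMulti (hf : ContDiff ℝ ∞ f) (s : Fin d →₀ ℕ) : ContDiff ℝ ∞ (pdMulti s f) :=
  hf.dAlong _

def symbolEval (f : (Fin d → ℝ) → ℂ) : MvPolynomial (Fin d) ℂ →ₗ[ℂ] ((Fin d → ℝ) → ℂ) :=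
  (basisMonomials (Fin d) ℂ).constr ℂ fun s => pdMulti s f

theorem symbolEval_monomial (s : Fin d →₀ ℕ) (c : ℂ) :
    symbolEval f (monomial s c) = c • pdMulti s f := by
  rw [show monomial s c = c • basisMonomials (Fin d) ℂ s by simp [smul_monomial], map_smul,
    symbolEval, Module.Basis.constr_basis]

theorem symbolEval_one : symbolEval f 1 = f := by
  rw [← C_1, C_apply, symbolEval_monomial, pdMulti_zero, one_smul]

theorem ContDiff.symbolEval (hf : ContDiff ℝ ∞ f) (p : MvPolynomial (Fin d) ℂ) :
    ContDiff ℝ ∞ (symbolEval f p) := by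
  induction p using MvPolynomial.induction_on' with
  | monomial s c => rw [symbolEval_monomial]; exact (hf.pdMulti s).const_smul c
  | add p q hp hq => rw [map_add]; exact hp.add hq

theorem symbolEval_X_mul (hf : ContDiff ℝ ∞ f) (i : Fin d) (p : MvPolynomial (Fin d) ℂ) :
    symbolEval f (X i * p) = pd d i (symbolEval f p) := by
  induction p using MvPolynomial.induction_on' with
  | monomial s c =>
    rw [X, monomial_mul, one_mul, symbolEval_monomial, symbolEval_monomial,
      pd_smul ((hf.pdMulti s).differentiable (by simp)), pdMulti_single_add hf]
  | add p q hp hq =>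
    rw [mul_add, map_add, map_add, hp, hq,
      pd_add ((hf.symbolEval p).differentiable (by simp))
        ((hf.symbolEval q).differentiable (by simp))]

theorem dAlong_symbolEval (hf : ContDiff ℝ ∞ f) (l : List (Fin d)) (p : MvPolynomial (Fin d) ℂ) :
    dAlong d l (symbolEval f p) = symbolEval f ((l.map X).prod * p) := by
  induction l with
  | nil => simp [dAlong]
  | cons i l ih =>
    rw [List.map_cons, List.prod_cons, mul_assoc, symbolEval_X_mul hf, ← ih]
    rfl

def quadSymbol (m : Matrix (Fin d) (Fin d) ℂ) : MvPolynomial (Fin d) ℂ :=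
  ∑ a, ∑ b, m a b • (X a * X b)

theorem dG_symbolEval (hf : ContDiff ℝ ∞ f) (m : Matrix (Fin d) (Fin d) ℂ)
    (p : MvPolynomial (Fin d) ℂ) :
    dG d m (symbolEval f p) = symbolEval f (quadSymbol m * p) := by
  ext u
  simp [dG, quadSymbol, Finset.sum_mul, mul_assoc, symbolEval_X_mul hf]

theorem iterate_dG_symbolEval (hf : ContDiff ℝ ∞ f) (m : Matrix (Fin d) (Fin d) ℂ) (k : ℕ)
    (p : MvPolynomial (Fin d) ℂ) :
    (dG d m)^[k] (symbolEval f p) = symbolEval f (quadSymbol m ^ k * p) := by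
  induction k with
  | zero => simp
  | succ k ih => rw [Function.iterate_succ_apply', ih, dG_symbolEval hf, pow_succ', mul_assoc]

def bisymbolEval (f g : (Fin d → ℝ) → ℂ) :
    MvPolynomial (Fin d) ℂ ⊗[ℂ] MvPolynomial (Fin d) ℂ →ₗ[ℂ] ((Fin d → ℝ) → ℂ) :=
  LinearMap.mul' ℂ _ ∘ₗ TensorProduct.map (symbolEval f) (symbolEval g)

theorem bisymbolEval_tmul (p q : MvPolynomial (Fin d) ℂ) :
    bisymbolEval f g (p ⊗ₜ q) = symbolEval f p * symbolEval g q := by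
  simp [bisymbolEval]

theorem ContDiff.bisymbolEval (hf : ContDiff ℝ ∞ f) (hg : ContDiff ℝ ∞ g)
    (t : MvPolynomial (Fin d) ℂ ⊗[ℂ] MvPolynomial (Fin d) ℂ) :
    ContDiff ℝ ∞ (bisymbolEval f g t) := by
  induction t using TensorProduct.induction_on with
  | zero => rw [map_zero]; exact contDiff_const
  | tmul p q => rw [bisymbolEval_tmul]; exact (hf.symbolEval p).mul (hg.symbolEval q)
  | add s t hs ht => rw [map_add]; exact hs.add ht

def diagSymbol (i : Fin d) : MvPolynomial (Fin d) ℂ ⊗[ℂ] MvPolynomial (Fin d) ℂ :=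
  X i ⊗ₜ 1 + 1 ⊗ₜ X i

theorem bisymbolEval_diagSymbol_mul (hf : ContDiff ℝ ∞ f) (hg : ContDiff ℝ ∞ g) (i : Fin d)
    (t : MvPolynomial (Fin d) ℂ ⊗[ℂ] MvPolynomial (Fin d) ℂ) :
    bisymbolEval f g (diagSymbol i * t) = pd d i (bisymbolEval f g t) := by
  induction t using TensorProduct.induction_on with
  | zero => simp [pd_zero]
  | tmul p q =>
    rw [diagSymbol, add_mul, Algebra.TensorProduct.tmul_mul_tmul,
      Algebra.TensorProduct.tmul_mul_tmul, one_mul, one_mul, map_add, bisymbolEval_tmul,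
      bisymbolEval_tmul, bisymbolEval_tmul, symbolEval_X_mul hf, symbolEval_X_mul hg,
      pd_mul ((hf.symbolEval p).differentiable (by simp))
        ((hg.symbolEval q).differentiable (by simp))]
  | add s t hs ht =>
    rw [mul_add, map_add, map_add, hs, ht, pd_add ((hf.bisymbolEval hg s).differentiable (by simp))
      ((hf.bisymbolEval hg t).differentiable (by simp))]

def pairSymbol (m : Matrix (Fin d) (Fin d) ℂ) :
    MvPolynomial (Fin d) ℂ ⊗[ℂ] MvPolynomial (Fin d) ℂ :=
  ∑ ab : Fin d × Fin d, m ab.1 ab.2 • (X ab.1 ⊗ₜ X ab.2)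

theorem pairSymbol_add (m m' : Matrix (Fin d) (Fin d) ℂ) :
    pairSymbol (m + m') = pairSymbol m + pairSymbol m' := by
  simp [pairSymbol, add_smul, Finset.sum_add_distrib]

theorem sum_smul_diagSymbol_mul {m : Matrix (Fin d) (Fin d) ℂ} (hm : m.IsSymm) :
    ∑ a, ∑ b, m a b • (diagSymbol a * diagSymbol b)
      = quadSymbol m ⊗ₜ 1 + 1 ⊗ₜ quadSymbol m + 2 • pairSymbol m := by
  have hswap : ∑ a, ∑ b, m a b • (X b ⊗ₜ[ℂ] X a) = pairSymbol m := by
    rw [Finset.sum_comm, pairSymbol, Fintype.sum_prod_type]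
    simp_rw [hm.apply]
  simp only [diagSymbol, add_mul, mul_add, Algebra.TensorProduct.tmul_mul_tmul, one_mul, mul_one,
    smul_add, Finset.sum_add_distrib, quadSymbol, TensorProduct.sum_tmul, TensorProduct.tmul_sum,
    ← TensorProduct.smul_tmul', TensorProduct.tmul_smul, hswap]
  rw [pairSymbol, Fintype.sum_prod_type]
  abel

theorem dG_bisymbolEval (hf : ContDiff ℝ ∞ f) (hg : ContDiff ℝ ∞ g)
    {m : Matrix (Fin d) (Fin d) ℂ} (hm : m.IsSymm)
    (t : MvPolynomial (Fin d) ℂ ⊗[ℂ] MvPolynomial (Fin d) ℂ) :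
    dG d m (bisymbolEval f g t)
      = bisymbolEval f g ((quadSymbol m ⊗ₜ 1 + 1 ⊗ₜ quadSymbol m + 2 • pairSymbol m) * t) := by
  rw [← sum_smul_diagSymbol_mul hm]
  ext u
  simp only [dG, Finset.sum_mul, smul_mul_assoc, mul_assoc, map_sum, map_smul,
    bisymbolEval_diagSymbol_mul hf hg, Finset.sum_apply, Pi.smul_apply, smul_eq_mul]

theorem iterate_dG_bisymbolEval (hf : ContDiff ℝ ∞ f) (hg : ContDiff ℝ ∞ g)
    {m : Matrix (Fin d) (Fin d) ℂ} (hm : m.IsSymm) (k : ℕ)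
    (t : MvPolynomial (Fin d) ℂ ⊗[ℂ] MvPolynomial (Fin d) ℂ) :
    (dG d m)^[k] (bisymbolEval f g t)
      = bisymbolEval f g ((quadSymbol m ⊗ₜ 1 + 1 ⊗ₜ quadSymbol m + 2 • pairSymbol m) ^ k * t) := by
  induction k with
  | zero => simp
  | succ k ih =>
    rw [Function.iterate_succ_apply', ih, dG_bisymbolEval hf hg hm, pow_succ', mul_assoc]

theorem Algebra.TensorProduct.prod_tmul_prod {R A B ι : Type*} [CommSemiring R] [CommSemiring A]
    [Algebra R A] [CommSemiring B] [Algebra R B] (s : Finset ι) (x : ι → A) (y : ι → B) :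
    ∏ i ∈ s, x i ⊗ₜ[R] y i = (∏ i ∈ s, x i) ⊗ₜ[R] (∏ i ∈ s, y i) := by
  classical
  induction s using Finset.induction_on with
  | empty => simp [Algebra.TensorProduct.one_def]
  | insert i s hi ih =>
    rw [Finset.prod_insert hi, Finset.prod_insert hi, Finset.prod_insert hi, ih,
      Algebra.TensorProduct.tmul_mul_tmul]

theorem pairSymbol_pow (m : Matrix (Fin d) (Fin d) ℂ) (j : ℕ) :
    pairSymbol m ^ j = ∑ a : Fin j → Fin d, ∑ b : Fin j → Fin d,
      (∏ l, m (a l) (b l)) • ((∏ l, X (a l)) ⊗ₜ[ℂ] (∏ l, X (b l))) := by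
  rw [pairSymbol, Finset.sum_pow', Fintype.piFinset_univ, ← Fintype.sum_prod_type',
    ← (Equiv.arrowProdEquivProdArrow _ _ _).sum_comp]
  refine Fintype.sum_congr _ _ fun p => ?_
  rw [Finset.prod_smul, Algebra.TensorProduct.prod_tmul_prod]
  rfl

theorem CA_symbolEval (hf : ContDiff ℝ ∞ f) (hg : ContDiff ℝ ∞ g) (j : ℕ)
    (m : Matrix (Fin d) (Fin d) ℂ) (p q : MvPolynomial (Fin d) ℂ) :
    CA d j m (symbolEval f p) (symbolEval g q)
      = bisymbolEval f g ((1 / (j.factorial : ℂ)) • (pairSymbol m ^ j * p ⊗ₜ q)) := by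
  ext u
  simp only [CA, pairSymbol_pow, dAlong_symbolEval hf, dAlong_symbolEval hg, List.map_ofFn,
    List.prod_ofFn, Finset.sum_mul, smul_mul_assoc, Algebra.TensorProduct.tmul_mul_tmul,
    map_smul, map_sum, bisymbolEval_tmul, Finset.sum_apply, Pi.smul_apply, Pi.mul_apply,
    smul_eq_mul]
  rfl

theorem CA_eq_bisymbolEval (hf : ContDiff ℝ ∞ f) (hg : ContDiff ℝ ∞ g) (j : ℕ)
    (m : Matrix (Fin d) (Fin d) ℂ) :
    CA d j m f g = bisymbolEval f g ((1 / (j.factorial : ℂ)) • pairSymbol m ^ j) := by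
  simpa [← Algebra.TensorProduct.one_def, symbolEval_one] using CA_symbolEval hf hg j m 1 1

theorem iterate_dG_eq_symbolEval (hf : ContDiff ℝ ∞ f) (m : Matrix (Fin d) (Fin d) ℂ) (k : ℕ) :
    (dG d m)^[k] f = symbolEval f (quadSymbol m ^ k) := by
  simpa [symbolEval_one] using iterate_dG_symbolEval hf m k 1

theorem iterate_dG_CA (hf : ContDiff ℝ ∞ f) (hg : ContDiff ℝ ∞ g)
    {m : Matrix (Fin d) (Fin d) ℂ} (hm : m.IsSymm) (α : Matrix (Fin d) (Fin d) ℂ) (a b : ℕ) :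
    (dG d m)^[a] (CA d b α f g) = bisymbolEval f g ((1 / (b.factorial : ℂ)) •
      ((quadSymbol m ⊗ₜ 1 + 1 ⊗ₜ quadSymbol m + 2 • pairSymbol m) ^ a * pairSymbol α ^ b)) := by
  rw [CA_eq_bisymbolEval hf hg, iterate_dG_bisymbolEval hf hg hm, mul_smul_comm]

theorem CA_iterate_dG (hf : ContDiff ℝ ∞ f) (hg : ContDiff ℝ ∞ g)
    (m α : Matrix (Fin d) (Fin d) ℂ) (a b c : ℕ) :
    CA d a α ((dG d m)^[b] f) ((dG d m)^[c] g) = bisymbolEval f g ((1 / (a.factorial : ℂ)) •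
      (pairSymbol α ^ a * ((quadSymbol m ⊗ₜ 1) ^ b * (1 ⊗ₜ quadSymbol m) ^ c))) := by
  rw [iterate_dG_eq_symbolEval hf, iterate_dG_eq_symbolEval hg, CA_symbolEval hf hg,
    Algebra.TensorProduct.tmul_pow, Algebra.TensorProduct.tmul_pow, one_pow, one_pow,
    Algebra.TensorProduct.tmul_mul_tmul, mul_one, one_mul]

section Exponential

open PowerSeries Finset.HasAntidiagonal

variable {R : Type*} [CommRing R] [Algebra ℚ R]

theorem PowerSeries.coeff_rescale_exp (x : R) (n : ℕ) :
    coeff n (rescale x (exp R)) = (1 / n.factorial : ℚ) • x ^ n := by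
  rw [coeff_rescale, coeff_exp, Algebra.smul_def, mul_comm]

theorem PowerSeries.rescale_exp_half_mul_rescale_exp (F G c x : R) :
    rescale ((2⁻¹ : ℚ) • (F + G + 2 • c)) (exp R) * rescale x (exp R)
      = rescale (x + c) (exp R) *
          (rescale ((2⁻¹ : ℚ) • F) (exp R) * rescale ((2⁻¹ : ℚ) • G) (exp R)) := by
  simp only [exp_mul_exp_eq_exp_add]
  congr 2
  module

theorem coeff_rescale_exp_half_mul_rescale_exp (F G c x : R) (N : ℕ) :
    ∑ ab ∈ antidiagonal N, (1 / (2 ^ ab.1 * ab.1.factorial) : ℚ) •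
        (1 / ab.2.factorial : ℚ) • ((F + G + 2 • c) ^ ab.1 * x ^ ab.2)
      = ∑ abc ∈ antidiagonal N, ∑ bc ∈ antidiagonal abc.2,
          (1 / (2 ^ bc.1 * bc.1.factorial) : ℚ) • (1 / (2 ^ bc.2 * bc.2.factorial) : ℚ) •
            (1 / abc.1.factorial : ℚ) • ((x + c) ^ abc.1 * (F ^ bc.1 * G ^ bc.2)) := by
  have h := congrArg (coeff N) (rescale_exp_half_mul_rescale_exp F G c x)
  simp only [PowerSeries.coeff_mul, coeff_rescale_exp, smul_pow, Finset.mul_sum] at h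
  convert h using 4 with ab _ abc _ bc <;>
  · simp only [smul_mul_assoc, mul_smul_comm, smul_smul, inv_pow]
    congr 1
    ring

end Exponential

theorem statement15_general (d : ℕ) (α β : Matrix (Fin d) (Fin d) ℂ)
    (hsym : (β - α).IsSymm) (f g : (Fin d → ℝ) → ℂ)
    (hf : ContDiff ℝ (⊤ : ℕ∞) f) (hg : ContDiff ℝ (⊤ : ℕ∞) g) :
    ∀ (N : ℕ) (u : Fin d → ℝ),
      (∑ ab ∈ Finset.HasAntidiagonal.antidiagonal N,
          (1 / ((2 : ℂ) ^ ab.1 * (Nat.factorial ab.1 : ℂ))) *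
            (dG d (β - α))^[ab.1] (CA d ab.2 α f g) u) =
        (∑ abc ∈ Finset.HasAntidiagonal.antidiagonal N, ∑ bc ∈ Finset.HasAntidiagonal.antidiagonal abc.2,
          (1 / ((2 : ℂ) ^ bc.1 * (Nat.factorial bc.1 : ℂ))) *
            (1 / ((2 : ℂ) ^ bc.2 * (Nat.factorial bc.2 : ℂ))) *
            CA d abc.1 β ((dG d (β - α))^[bc.1] f) ((dG d (β - α))^[bc.2] g) u) := by
  intro N u
  set γ := β - α
  set Q := quadSymbol γ
  obtain ⟨E, hE⟩ : ∃ E : MvPolynomial (Fin d) ℂ ⊗[ℂ] MvPolynomial (Fin d) ℂ →ₗ[ℂ] ℂ,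
      ∀ t, E t = bisymbolEval f g t u :=
    ⟨(LinearMap.proj u).comp (bisymbolEval f g), fun _ => rfl⟩
  have hβ : pairSymbol β = pairSymbol α + pairSymbol γ := by
    rw [← pairSymbol_add, add_sub_cancel]
  have lhs (a b : ℕ) : 1 / ((2 : ℂ) ^ a * a.factorial) * (dG d γ)^[a] (CA d b α f g) u
      = E ((1 / (2 ^ a * a.factorial) : ℚ) • (1 / b.factorial : ℚ) •
          ((Q ⊗ₜ 1 + 1 ⊗ₜ Q + 2 • pairSymbol γ) ^ a * pairSymbol α ^ b)) := by
    rw [iterate_dG_CA hf hg hsym, map_rat_smul E, map_rat_smul E, hE, map_smul]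
    simp only [Pi.smul_apply, smul_eq_mul, Rat.smul_def]
    push_cast
    ring
  have rhs (a b c : ℕ) : 1 / ((2 : ℂ) ^ b * b.factorial) * (1 / ((2 : ℂ) ^ c * c.factorial)) *
      CA d a β ((dG d γ)^[b] f) ((dG d γ)^[c] g) u
      = E ((1 / (2 ^ b * b.factorial) : ℚ) • (1 / (2 ^ c * c.factorial) : ℚ) •
          (1 / a.factorial : ℚ) • ((pairSymbol α + pairSymbol γ) ^ a *
            ((Q ⊗ₜ 1) ^ b * (1 ⊗ₜ Q) ^ c))) := by
    rw [CA_iterate_dG hf hg, ← hβ, map_rat_smul E, map_rat_smul E, map_rat_smul E, hE, map_smul]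
    simp only [Pi.smul_apply, smul_eq_mul, Rat.smul_def]
    push_cast
    ring
  simp only [lhs, rhs, ← map_sum, coeff_rescale_exp_half_mul_rescale_exp]

/-- Order-`N` coefficient in `ℏ` of the identity
`e^{(ℏ/2)∂_γ}(f ⋆_α g) = (e^{(ℏ/2)∂_γ} f) ⋆_β (e^{(ℏ/2)∂_γ} g)` where `γ = β − α` is
symmetric: `Σ_{a+b=N} (1/(2^a a!)) ∂_γ^a(C_b^α(f,g))
= Σ_{a+b+c=N} (1/(2^b b!))(1/(2^c c!)) C_a^β(∂_γ^b f, ∂_γ^c g)`. -/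
theorem statement15 (d : ℕ) (hd : 1 ≤ d) (α β : Matrix (Fin d) (Fin d) ℂ)
    (hsym : (β - α).IsSymm) (f g : (Fin d → ℝ) → ℂ)
    (hf : ContDiff ℝ (⊤ : ℕ∞) f) (hg : ContDiff ℝ (⊤ : ℕ∞) g)
    (hperf : IsPeriodic d f) (hperg : IsPeriodic d g) :
    ∀ (N : ℕ) (u : Fin d → ℝ),
      (∑ ab ∈ Finset.HasAntidiagonal.antidiagonal N,
          (1 / ((2 : ℂ) ^ ab.1 * (Nat.factorial ab.1 : ℂ))) *
            (dG d (β - α))^[ab.1] (CA d ab.2 α f g) u) =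
        (∑ abc ∈ Finset.HasAntidiagonal.antidiagonal N, ∑ bc ∈ Finset.HasAntidiagonal.antidiagonal abc.2,
          (1 / ((2 : ℂ) ^ bc.1 * (Nat.factorial bc.1 : ℂ))) *
            (1 / ((2 : ℂ) ^ bc.2 * (Nat.factorial bc.2 : ℂ))) *
            CA d abc.1 β ((dG d (β - α))^[bc.1] f) ((dG d (β - α))^[bc.2] g) u) :=
  statement15_general d α β hsym f g hf hg
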